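/- Let L ∈ GL(m, ℝ) have all eigenvalues of modulus less than 1 and ε > 0. For n ∈ S^{m−1} define x(n) := ε · Σ_{k=0}^∞ L^k (L_⊥^{-k}(n)), where L_⊥(n) = (L^T)^{-1} n / ‖(L^T)^{-1} n‖. Then this series converges absolutely for every n ∈ S^{m−1}, and n ↦ x(n) is continuous. -/

import Mathlib

noncomputable section

/-- All (complex) eigenvalues of the real matrix `M` have modulus less than 1. -/
def specLt1 {m : ℕ} (M : Matrix (Fin m) (Fin m) ℝ) : Prop :=
  ∀ μ ∈ spectrum ℂ (M.map Complex.ofReal), ‖μ‖ < 1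

/-- The inverse `L_⊥⁻¹(n) = Lᵀ n / ‖Lᵀ n‖` of the induced map on unit normal vectors. -/
def LperpInv {m : ℕ} (M : Matrix (Fin m) (Fin m) ℝ) (n : EuclideanSpace ℝ (Fin m)) :
    EuclideanSpace ℝ (Fin m) :=
  ‖Matrix.toEuclideanLin M.transpose n‖⁻¹ • Matrix.toEuclideanLin M.transpose n

/-!
Every `L_⊥^{-k}(n)` is a unit vector, so the `k`-th term has norm at most `‖L^k‖`, measured in
the operator norm of the complexified matrix. By Gelfand's formula `‖L^k‖ ≤ r^k` eventually, for
any `r` between the spectral radius and `1`; the Weierstrass M-test then gives absolute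
convergence, uniformly on the sphere, and hence continuity of the sum.
-/

open Set Filter Metric Matrix
open scoped Matrix.Norms.L2Operator NNReal

section GelfandBound

variable {A : Type*} [NormedRing A] [NormedAlgebra ℂ A] [CompleteSpace A]

theorem eventually_norm_pow_le_of_spectralRadius_lt {a : A} {r : ℝ≥0}
    (h : spectralRadius ℂ a < r) : ∀ᶠ k : ℕ in atTop, ‖a ^ k‖ ≤ r ^ k := by
  filter_upwards [eventually_ne_atTop 0,
    (spectrum.pow_norm_pow_one_div_tendsto_nhds_spectralRadius a).eventually_lt_const h]
    with k hk0 hk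
  have hroot : ‖a ^ k‖ ^ (1 / k : ℝ) < r :=
    (ENNReal.ofReal_lt_coe_iff (by positivity)).mp hk
  calc ‖a ^ k‖ = (‖a ^ k‖ ^ ((k : ℝ)⁻¹)) ^ k :=
        (Real.rpow_inv_natCast_pow (norm_nonneg _) hk0).symm
    _ ≤ r ^ k := by
      rw [← one_div]
      exact pow_le_pow_left₀ (by positivity) hroot.le k

theorem summable_norm_pow_of_spectralRadius_lt_one {a : A} (h : spectralRadius ℂ a < 1) :
    Summable fun k : ℕ => ‖a ^ k‖ := by
  obtain ⟨r, hr, hr1⟩ := ENNReal.lt_iff_exists_nnreal_btwn.mp h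
  have hgeom := summable_geometric_of_lt_one r.coe_nonneg (by exact_mod_cast hr1)
  refine hgeom.of_norm_bounded_eventually_nat ?_
  filter_upwards [eventually_norm_pow_le_of_spectralRadius_lt hr] with k hk
  rwa [norm_norm]

end GelfandBound

theorem spectralRadius_lt_one_of_specLt1 {m : ℕ} {M : Matrix (Fin m) (Fin m) ℝ}
    (hspec : specLt1 M) : spectralRadius ℂ (M.map Complex.ofReal) < 1 := by
  rcases (spectrum ℂ (M.map Complex.ofReal)).eq_empty_or_nonempty with h | h
  · simp [spectralRadius, h]
  · exact spectrum.spectralRadius_lt_of_forall_lt_of_nonempty h fun μ hμ => by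
      exact_mod_cast hspec μ hμ

theorem norm_toLp_ofReal {ι : Type*} [Fintype ι] (w : EuclideanSpace ℝ ι) :
    ‖(WithLp.toLp 2 fun i => (w i : ℂ) : EuclideanSpace ℂ ι)‖ = ‖w‖ := by
  simp [EuclideanSpace.norm_eq]

theorem norm_toEuclideanLin_le_norm_map_ofReal {ι : Type*} [Fintype ι] [DecidableEq ι]
    (B : Matrix ι ι ℝ) (w : EuclideanSpace ℝ ι) :
    ‖toEuclideanLin B w‖ ≤ ‖B.map Complex.ofReal‖ * ‖w‖ := by
  have hmap : toEuclideanLin (B.map Complex.ofReal) (WithLp.toLp 2 fun i => (w i : ℂ)) =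
      WithLp.toLp 2 fun i => (toEuclideanLin B w i : ℂ) := by
    ext i
    exact (RingHom.map_mulVec Complex.ofRealHom B w.ofLp i).symm
  rw [← norm_toLp_ofReal, ← norm_toLp_ofReal w, ← hmap]
  exact (toEuclideanCLM (𝕜 := ℂ) (B.map Complex.ofReal)).le_opNorm _

section Sphere

variable {m : ℕ} {M : Matrix (Fin m) (Fin m) ℝ}

theorem toEuclideanLin_transpose_ne_zero (hdet : IsUnit M.det) {v : EuclideanSpace ℝ (Fin m)}
    (hv : v ≠ 0) : toEuclideanLin Mᵀ v ≠ 0 := by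
  have hinj : Function.Injective Mᵀ.mulVec :=
    mulVec_injective_iff_isUnit.mpr ((isUnit_iff_isUnit_det _).mpr (by rwa [det_transpose]))
  intro h
  refine hv (WithLp.ofLp_injective 2 (hinj ?_))
  simpa [toLpLin_apply] using congrArg WithLp.ofLp h

theorem norm_LperpInv (hdet : IsUnit M.det) {v : EuclideanSpace ℝ (Fin m)} (hv : v ≠ 0) :
    ‖LperpInv M v‖ = 1 :=
  norm_smul_inv_norm (toEuclideanLin_transpose_ne_zero hdet hv)

theorem mapsTo_LperpInv_sphere (hdet : IsUnit M.det) :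
    MapsTo (LperpInv M) (sphere 0 1) (sphere 0 1) := fun v hv =>
  mem_sphere_zero_iff_norm.mpr (norm_LperpInv hdet (ne_zero_of_mem_unit_sphere ⟨v, hv⟩))

theorem continuousOn_LperpInv_sphere (hdet : IsUnit M.det) :
    ContinuousOn (LperpInv M) (sphere 0 1) := by
  have hL : Continuous (toEuclideanLin Mᵀ) := LinearMap.continuous_of_finiteDimensional _
  refine (hL.norm.continuousOn.inv₀ fun v hv => ?_).smul hL.continuousOn
  exact norm_ne_zero_iff.mpr
    (toEuclideanLin_transpose_ne_zero hdet (ne_zero_of_mem_unit_sphere ⟨v, hv⟩))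

theorem norm_iterate_toEuclideanLin_LperpInv_le (hdet : IsUnit M.det) (k : ℕ)
    {n : EuclideanSpace ℝ (Fin m)} (hn : n ∈ sphere 0 1) :
    ‖(fun v => toEuclideanLin M v)^[k] ((LperpInv M)^[k] n)‖ ≤ ‖M.map Complex.ofReal ^ k‖ := by
  have hunit : ‖(LperpInv M)^[k] n‖ = 1 :=
    mem_sphere_zero_iff_norm.mp ((mapsTo_LperpInv_sphere hdet).iterate k hn)
  calc ‖(fun v => toEuclideanLin M v)^[k] ((LperpInv M)^[k] n)‖
      = ‖toEuclideanLin (M ^ k) ((LperpInv M)^[k] n)‖ := by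
        rw [toLpLin_pow, Module.End.coe_pow]
    _ ≤ ‖(M ^ k).map Complex.ofReal‖ * ‖(LperpInv M)^[k] n‖ :=
        norm_toEuclideanLin_le_norm_map_ofReal _ _
    _ = ‖M.map Complex.ofReal ^ k‖ := by
        rw [hunit, mul_one]
        exact congrArg norm (Matrix.map_pow M Complex.ofRealHom k)

end Sphere

theorem stmt16_general {m : ℕ} (M : Matrix (Fin m) (Fin m) ℝ) (hdet : IsUnit M.det)
    (hspec : specLt1 M) (ε : ℝ) :
    (∀ n : EuclideanSpace ℝ (Fin m), ‖n‖ = 1 →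
      Summable fun k : ℕ =>
        ‖(fun v => Matrix.toEuclideanLin M v)^[k] ((LperpInv M)^[k] n)‖) ∧
    ContinuousOn
      (fun n : EuclideanSpace ℝ (Fin m) =>
        ε • ∑' k : ℕ, (fun v => Matrix.toEuclideanLin M v)^[k] ((LperpInv M)^[k] n))
      (Metric.sphere (0 : EuclideanSpace ℝ (Fin m)) 1) := by
  have hsum := summable_norm_pow_of_spectralRadius_lt_one (spectralRadius_lt_one_of_specLt1 hspec)
  have hbound : ∀ k, ∀ n ∈ sphere (0 : EuclideanSpace ℝ (Fin m)) 1, _ :=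
    fun k n hn => norm_iterate_toEuclideanLin_LperpInv_le hdet k hn
  refine ⟨fun n hn => hsum.of_nonneg_of_le (fun _ => norm_nonneg _)
    fun k => hbound k n (mem_sphere_zero_iff_norm.mpr hn), ?_⟩
  refine (continuousOn_tsum (fun k => ?_) hsum hbound).const_smul ε
  exact (LinearMap.continuous_of_finiteDimensional _ |>.iterate k).comp_continuousOn
    ((continuousOn_LperpInv_sphere hdet).iterate (mapsTo_LperpInv_sphere hdet) k)

/-- The series `x(n) = ε ∑ₖ L^k (L_⊥^{-k}(n))` converges absolutely for every unit vector `n`,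
and `n ↦ x(n)` is continuous on the unit sphere. -/
theorem stmt16 {m : ℕ} (M : Matrix (Fin m) (Fin m) ℝ) (hdet : IsUnit M.det)
    (hspec : specLt1 M) (ε : ℝ) (hε : 0 < ε) :
    (∀ n : EuclideanSpace ℝ (Fin m), ‖n‖ = 1 →
      Summable fun k : ℕ =>
        ‖(fun v => Matrix.toEuclideanLin M v)^[k] ((LperpInv M)^[k] n)‖) ∧
    ContinuousOn
      (fun n : EuclideanSpace ℝ (Fin m) =>
        ε • ∑' k : ℕ, (fun v => Matrix.toEuclideanLin M v)^[k] ((LperpInv M)^[k] n))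
      (Metric.sphere (0 : EuclideanSpace ℝ (Fin m)) 1) :=
  stmt16_general M hdet hspec ε
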